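/- Discrete Gronwall inequality: Let τ > 0, let N be a natural number, let B, K ≥ 0, and let (y_n), (h_n), (g_n), (f_n) be nonnegative real sequences such that y_m + τ·∑_{n=0}^{m} h_n ≤ B + τ·∑_{n=0}^{m} (g_n·y_n + f_n) for every m with 0 ≤ m ≤ N, that τ·∑_{n=0}^{N} g_n ≤ K, and that τ·g_n < 1 for every n with 0 ≤ n ≤ N. Set ρ = max_{0 ≤ n ≤ N} (1 − τ·g_n)^{-1}. Then y_m + τ·∑_{n=0}^{m} h_n ≤ exp(ρ·K)·(B + τ·∑_{n=0}^{m} f_n) for every m with 0 ≤ m ≤ N. -/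

import Mathlib

/-!
With `aₙ = τ gₙ` and `Eₘ = yₘ + τ ∑_{n ≤ m} hₙ`, the hypothesis gives, for `k ≤ m`,
`E_k ≤ S + ∑_{n ≤ k} aₙ Eₙ` with the constant `S = B + τ ∑_{n ≤ m} fₙ`. Absorbing the last term
`a_k E_k` into the left-hand side, the right-hand sides `T_k = S + ∑_{n < k} aₙ Eₙ` satisfy
`T_{k+1} ≤ T_k / (1 - a_k)`, so `Eₘ ≤ S ∏_{n ≤ m} (1 - aₙ)⁻¹`. Finally
`(1 - a)⁻¹ = 1 + a (1 - a)⁻¹ ≤ 1 + ρ a ≤ exp (ρ a)` bounds the product by `exp (ρ ∑ aₙ) ≤ exp (ρ K)`.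
-/

namespace DiscreteGronwallPaper

open Finset

theorem le_mul_inv_one_sub_of_le_add_mul {x t a : ℝ} (ha : a < 1) (h : x ≤ t + a * x) :
    x ≤ t * (1 - a)⁻¹ := by
  rw [← div_eq_mul_inv, le_div_iff₀ (by linarith)]
  linarith

theorem inv_one_sub_le_exp {a ρ : ℝ} (ha0 : 0 ≤ a) (ha1 : a < 1) (hρ : (1 - a)⁻¹ ≤ ρ) :
    (1 - a)⁻¹ ≤ Real.exp (ρ * a) :=
  have hne : 1 - a ≠ 0 := by linarith
  calc (1 - a)⁻¹ = 1 + a * (1 - a)⁻¹ := by field_simp; ring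
    _ ≤ 1 + ρ * a := by nlinarith
    _ ≤ Real.exp (ρ * a) := by linarith [Real.add_one_le_exp (ρ * a)]

theorem prod_inv_one_sub_le_exp {ι : Type*} {s : Finset ι} {a : ι → ℝ} {ρ : ℝ}
    (ha0 : ∀ i ∈ s, 0 ≤ a i) (ha1 : ∀ i ∈ s, a i < 1) (hρ : ∀ i ∈ s, (1 - a i)⁻¹ ≤ ρ) :
    ∏ i ∈ s, (1 - a i)⁻¹ ≤ Real.exp (ρ * ∑ i ∈ s, a i) := by
  rw [mul_sum, Real.exp_sum]
  exact prod_le_prod (fun i hi => inv_nonneg.2 (by linarith [ha1 i hi]))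
    fun i hi => inv_one_sub_le_exp (ha0 i hi) (ha1 i hi) (hρ i hi)

theorem prod_range_inv_one_sub_le_exp {a : ℕ → ℝ} {N m : ℕ} {K : ℝ} (ha0 : ∀ n, 0 ≤ a n)
    (ha1 : ∀ n ≤ N, a n < 1) (haK : ∑ n ∈ range (N + 1), a n ≤ K) (hm : m ≤ N) :
    ∏ n ∈ range (m + 1), (1 - a n)⁻¹ ≤
      Real.exp ((range (N + 1)).sup' nonempty_range_add_one (fun n => (1 - a n)⁻¹) * K) := by
  set ρ := (range (N + 1)).sup' nonempty_range_add_one (fun n => (1 - a n)⁻¹)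
  have hρ : ∀ n ≤ N, (1 - a n)⁻¹ ≤ ρ := fun n hn =>
    le_sup' (fun n => (1 - a n)⁻¹) (mem_range_succ_iff.2 hn)
  have hρ0 : 0 ≤ ρ := (inv_nonneg.2 (by linarith [ha1 0 N.zero_le])).trans (hρ 0 N.zero_le)
  have hmN : ∀ n ∈ range (m + 1), n ≤ N := fun n hn => (mem_range_succ_iff.1 hn).trans hm
  calc _ ≤ Real.exp (ρ * ∑ n ∈ range (m + 1), a n) :=
        prod_inv_one_sub_le_exp (fun n _ => ha0 n) (fun n hn => ha1 n (hmN n hn))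
          fun n hn => hρ n (hmN n hn)
    _ ≤ Real.exp (ρ * K) := by
        gcongr
        refine le_trans ?_ haK
        gcongr
        exact fun n _ _ => ha0 n

section ImplicitGronwall

variable {a x : ℕ → ℝ} {c : ℝ} {N : ℕ}

theorem add_sum_range_le_mul_prod (ha0 : ∀ n ≤ N, 0 ≤ a n) (ha1 : ∀ n ≤ N, a n < 1)
    (hx : ∀ m ≤ N, x m ≤ c + ∑ n ∈ range (m + 1), a n * x n) :
    ∀ m ≤ N + 1, c + ∑ n ∈ range m, a n * x n ≤ c * ∏ n ∈ range m, (1 - a n)⁻¹ := by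
  intro m
  induction m with
  | zero => simp
  | succ m ih =>
    intro hm
    set T := c + ∑ n ∈ range m, a n * x n
    have hxm : x m ≤ T * (1 - a m)⁻¹ := by
      refine le_mul_inv_one_sub_of_le_add_mul (ha1 m (by omega)) ?_
      have := hx m (by omega)
      rwa [sum_range_succ, ← add_assoc] at this
    have hne : 1 - a m ≠ 0 := by linarith [ha1 m (by omega)]
    have hinv : 0 ≤ (1 - a m)⁻¹ := inv_nonneg.2 (by linarith [ha1 m (by omega)])
    calc c + ∑ n ∈ range (m + 1), a n * x n = T + a m * x m := by
          rw [sum_range_succ, add_assoc]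
      _ ≤ T + a m * (T * (1 - a m)⁻¹) := by gcongr; exact ha0 m (by omega)
      _ = T * (1 - a m)⁻¹ := by field_simp; ring
      _ ≤ c * (∏ n ∈ range m, (1 - a n)⁻¹) * (1 - a m)⁻¹ := by gcongr; exact ih (by omega)
      _ = c * ∏ n ∈ range (m + 1), (1 - a n)⁻¹ := by rw [prod_range_succ, mul_assoc]

theorem le_mul_prod_of_le_add_sum (ha0 : ∀ n ≤ N, 0 ≤ a n) (ha1 : ∀ n ≤ N, a n < 1)
    (hx : ∀ m ≤ N, x m ≤ c + ∑ n ∈ range (m + 1), a n * x n) :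
    ∀ m ≤ N, x m ≤ c * ∏ n ∈ range (m + 1), (1 - a n)⁻¹ := fun m hm =>
  (hx m hm).trans (add_sum_range_le_mul_prod ha0 ha1 hx (m + 1) (by omega))

end ImplicitGronwall

def energy (τ : ℝ) (y h : ℕ → ℝ) (m : ℕ) : ℝ := y m + τ * ∑ n ∈ range (m + 1), h n

theorem energy_le_add_sum_mul_energy {τ B : ℝ} {y h g f : ℕ → ℝ} {k m : ℕ} (hτ : 0 ≤ τ)
    (hh : ∀ n, 0 ≤ h n) (hg : ∀ n, 0 ≤ g n) (hf : ∀ n, 0 ≤ f n)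
    (hmain : energy τ y h k ≤ B + τ * ∑ n ∈ range (k + 1), (g n * y n + f n)) (hk : k ≤ m) :
    energy τ y h k ≤
      B + τ * ∑ n ∈ range (m + 1), f n + ∑ n ∈ range (k + 1), τ * g n * energy τ y h n := by
  have hyE : ∀ n, y n ≤ energy τ y h n := fun n =>
    le_add_of_nonneg_right (mul_nonneg hτ (sum_nonneg fun i _ => hh i))
  calc energy τ y h k ≤ B + τ * ∑ n ∈ range (k + 1), (g n * y n + f n) := hmain
    _ = B + τ * ∑ n ∈ range (k + 1), f n + ∑ n ∈ range (k + 1), τ * g n * y n := by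
        simp only [sum_add_distrib, mul_add, mul_sum, mul_assoc]
        ring
    _ ≤ B + τ * ∑ n ∈ range (m + 1), f n + ∑ n ∈ range (k + 1), τ * g n * energy τ y h n := by
        gcongr with n
        · exact fun n _ _ => hf n
        · exact mul_nonneg hτ (hg n)
        · exact hyE n

theorem discrete_gronwall_general
    (τ : ℝ) (hτ : 0 < τ) (N : ℕ) (B K : ℝ) (hB : 0 ≤ B)
    (y h g f : ℕ → ℝ)
    (hh : ∀ n, 0 ≤ h n) (hg : ∀ n, 0 ≤ g n) (hf : ∀ n, 0 ≤ f n)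
    (hmain : ∀ m ≤ N, y m + τ * ∑ n ∈ Finset.range (m + 1), h n ≤
      B + τ * ∑ n ∈ Finset.range (m + 1), (g n * y n + f n))
    (hgK : τ * ∑ n ∈ Finset.range (N + 1), g n ≤ K)
    (hg1 : ∀ n ≤ N, τ * g n < 1)
    (ρ : ℝ)
    (hρ : ρ = (Finset.range (N + 1)).sup' (Finset.nonempty_range_add_one)
      (fun n => (1 - τ * g n)⁻¹)) :
    ∀ m ≤ N, y m + τ * ∑ n ∈ Finset.range (m + 1), h n ≤
      Real.exp (ρ * K) * (B + τ * ∑ n ∈ Finset.range (m + 1), f n) := by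
  intro m hm
  have hS : 0 ≤ B + τ * ∑ n ∈ range (m + 1), f n :=
    add_nonneg hB (mul_nonneg hτ.le (sum_nonneg fun n _ => hf n))
  have hprod : energy τ y h m ≤
      (B + τ * ∑ n ∈ range (m + 1), f n) * ∏ n ∈ range (m + 1), (1 - τ * g n)⁻¹ :=
    le_mul_prod_of_le_add_sum (fun n _ => mul_nonneg hτ.le (hg n))
      (fun n hn => hg1 n (hn.trans hm))
      (fun k hk => energy_le_add_sum_mul_energy hτ.le hh hg hf (hmain k (hk.trans hm)) hk)
      m le_rfl
  have hexp : ∏ n ∈ range (m + 1), (1 - τ * g n)⁻¹ ≤ Real.exp (ρ * K) :=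
    hρ ▸ prod_range_inv_one_sub_le_exp (fun n => mul_nonneg hτ.le (hg n)) hg1
      (by rwa [mul_sum] at hgK) hm
  calc _ ≤ _ := hprod
    _ ≤ _ := mul_le_mul_of_nonneg_left hexp hS
    _ = _ := mul_comm _ _

/-- Discrete Gronwall inequality (Lemma 2.2). -/
theorem discrete_gronwall
    (τ : ℝ) (hτ : 0 < τ) (N : ℕ) (B K : ℝ) (hB : 0 ≤ B) (hK : 0 ≤ K)
    (y h g f : ℕ → ℝ)
    (hy : ∀ n, 0 ≤ y n) (hh : ∀ n, 0 ≤ h n) (hg : ∀ n, 0 ≤ g n) (hf : ∀ n, 0 ≤ f n)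
    (hmain : ∀ m ≤ N, y m + τ * ∑ n ∈ Finset.range (m + 1), h n ≤
      B + τ * ∑ n ∈ Finset.range (m + 1), (g n * y n + f n))
    (hgK : τ * ∑ n ∈ Finset.range (N + 1), g n ≤ K)
    (hg1 : ∀ n ≤ N, τ * g n < 1)
    (ρ : ℝ)
    (hρ : ρ = (Finset.range (N + 1)).sup' (Finset.nonempty_range_add_one)
      (fun n => (1 - τ * g n)⁻¹)) :
    ∀ m ≤ N, y m + τ * ∑ n ∈ Finset.range (m + 1), h n ≤
      Real.exp (ρ * K) * (B + τ * ∑ n ∈ Finset.range (m + 1), f n) :=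
  discrete_gronwall_general τ hτ N B K hB y h g f hh hg hf hmain hgK hg1 ρ hρ

end DiscreteGronwallPaper
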